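/- Under the Case-C1 setup, the removal of v_0 disconnects d_2 from both sources; that is, every path from s_1 to d_2 contains v_0 and every path from s_2 to d_2 contains v_0. -/

import Mathlib

open List

/-- `IsPath E p u w` : the nonempty list `p` of vertices is a directed path
from `u` to `w` with respect to the edge relation `E`. -/
def IsPath {V : Type*} (E : V → V → Prop) (p : List V) (u w : V) : Prop :=
  p ≠ [] ∧ p.head? = some u ∧ p.getLast? = some w ∧ p.Chain' E

/-- `Reaches E u w` (written `u ~> w`) : there is a directed path from `u` to `w`. -/
def Reaches {V : Type*} (E : V → V → Prop) (u w : V) : Prop :=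
  ∃ p, IsPath E p u w

/-- A two-unicast layered network: a finite directed graph, with two sources
`s1, s2` and two destinations `d1, d2` (all four distinct), vertices partitioned
into layers `1, ..., r` such that every edge goes from a layer to the next one,
the first layer is `{s1, s2}`, the last layer is `{d1, d2}`, and each source
reaches its corresponding destination. -/
structure TwoUnicastNetwork (V : Type*) [Fintype V] where
  E : V → V → Prop
  s1 : V
  s2 : V
  d1 : V
  d2 : V
  r : ℕ
  layer : V → ℕ
  layer_pos : ∀ v, 1 ≤ layer v
  layer_le : ∀ v, layer v ≤ r
  edge_layer : ∀ u w, E u w → layer w = layer u + 1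
  s_ne : s1 ≠ s2
  d_ne : d1 ≠ d2
  sd_ne : ∀ s d, (s = s1 ∨ s = s2) → (d = d1 ∨ d = d2) → s ≠ d
  first_layer : ∀ v, layer v = 1 ↔ v = s1 ∨ v = s2
  last_layer : ∀ v, layer v = r ↔ v = d1 ∨ v = d2
  conn1 : Reaches E s1 d1
  conn2 : Reaches E s2 d2

/-- `InterferesOn N S Ri srcOther v` : within the induced subgraph `G[S]`, the
node `v` causes interference on the path `Ri` : `v ∈ S`, `v ∉ Ri`, there is an
edge (inside `G[S]`) from `v` into a node of `Ri`, and there is a path from the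
other source `srcOther` to `v` lying inside `G[S]` and disjoint from `Ri`. -/
def InterferesOn {V : Type*} [Fintype V] (N : TwoUnicastNetwork V) (S : Set V)
    (Ri : List V) (srcOther : V) (v : V) : Prop :=
  v ∈ S ∧ v ∉ Ri ∧ (∃ w ∈ Ri, w ∈ S ∧ N.E v w) ∧
    ∃ q, IsPath N.E q srcOther v ∧ (∀ x ∈ q, x ∈ S) ∧ ∀ x ∈ q, x ∉ Ri

/-- `n_i(G[S])` : the number of nodes causing interference on `Ri` within the
induced subgraph `G[S]`, the interfering path coming from `srcOther`. -/
noncomputable def nInterf {V : Type*} [Fintype V] (N : TwoUnicastNetwork V)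
    (S : Set V) (Ri : List V) (srcOther : V) : ℕ :=
  {v | InterferesOn N S Ri srcOther v}.ncard

/-- `n_i^D` : the number of nodes of the other path `Rother` causing (direct)
interference on `Ri` in `G`. -/
noncomputable def nDirect {V : Type*} [Fintype V] (N : TwoUnicastNetwork V)
    (Ri Rother : List V) (srcOther : V) : ℕ :=
  {v | InterferesOn N Set.univ Ri srcOther v ∧ v ∈ Rother}.ncard

/-- The pair `(R1, R2)` (paths `s1 → d1` and `s2 → d2`) has manageable
interference: there is `S ⊇ R1 ∪ R2` with `n_1(G[S]) ≠ 1` and `n_2(G[S]) ≠ 1`. -/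
def Manageable {V : Type*} [Fintype V] (N : TwoUnicastNetwork V)
    (R1 R2 : List V) : Prop :=
  ∃ S : Set V, (∀ x ∈ R1, x ∈ S) ∧ (∀ x ∈ R2, x ∈ S) ∧
    nInterf N S R1 N.s2 ≠ 1 ∧ nInterf N S R2 N.s1 ≠ 1

/-- The pair `(R1, R2)` has `(s1,d1)`-manageable interference. -/
def Manageable1 {V : Type*} [Fintype V] (N : TwoUnicastNetwork V)
    (R1 R2 : List V) : Prop :=
  ∃ S : Set V, (∀ x ∈ R1, x ∈ S) ∧ (∀ x ∈ R2, x ∈ S) ∧ nInterf N S R1 N.s2 ≠ 1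

/-- The pair `(R1, R2)` has `(s2,d2)`-manageable interference. -/
def Manageable2 {V : Type*} [Fintype V] (N : TwoUnicastNetwork V)
    (R1 R2 : List V) : Prop :=
  ∃ S : Set V, (∀ x ∈ R1, x ∈ S) ∧ (∀ x ∈ R2, x ∈ S) ∧ nInterf N S R2 N.s1 ≠ 1

/-- Removal of the vertex `v` disconnects `a` from `b` :
every path from `a` to `b` contains `v`. -/
def CutVert {V : Type*} [Fintype V] (N : TwoUnicastNetwork V) (v a b : V) : Prop :=
  ∀ p, IsPath N.E p a b → v ∈ p



/-!
Since `v2 → v0` is the only edge into `P22` from a node that `s1` reaches off `P22`, a path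
from `s1 ∉ P22` can enter `P22` only through `v0`; this is the first claim. If a path `Q` from
`s2` to `d2` avoided `v0`, then `v0` would separate `s1` from every node of `Q`: prolong a path
`s1 ⇝ x ∈ Q` along `Q` to `d2 ∈ P22`. So `Q` is disjoint from `P11`, does not contain `v1`
(reached from `s1` through `v2` and the end of `P_{s2,v1}`, which avoid `v0`), and no node off
`v0` interferes on `Q`. Then `(P11, Q)` has manageable interference, contradicting the Case-C1
assumption: `n_1` is `0` on `P11 ∪ Q` unless some node of `Q` has an edge into `P11`, and in that
case this node and `v1` are two interferers on `P11 ∪ Q ∪ P_{s2,v1}`.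
-/

namespace IsPath

variable {V : Type*} {E : V → V → Prop} {p q : List V} {a b c m w x : V}

theorem isChain (h : IsPath E p a b) : p.IsChain E := h.2.2.2

theorem getLast_mem (h : IsPath E p a b) : b ∈ p := mem_of_getLast? h.2.2.1

theorem exists_eq_cons (h : IsPath E p a b) : ∃ t, p = a :: t := head?_eq_some_iff.mp h.2.1

theorem singleton (a : V) : IsPath E [a] a a := ⟨cons_ne_nil _ _, rfl, rfl, isChain_singleton a⟩

theorem append (h₁ : IsPath E p a m) (h₂ : IsPath E q c b) (e : E m c) :
    IsPath E (p ++ q) a b := by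
  refine ⟨by simp [h₁.1], by simp [h₁.2.1], by simp [h₂.2.2.1], ?_⟩
  refine h₁.isChain.append h₂.isChain fun x hx y hy => ?_
  rw [h₁.2.2.1, Option.mem_some_iff] at hx
  rw [h₂.2.1, Option.mem_some_iff] at hy
  exact hx ▸ hy ▸ e

theorem concat (h : IsPath E p a m) (e : E m w) : IsPath E (p ++ [w]) a w :=
  h.append (singleton w) e

theorem cons (e : E a c) (h : IsPath E p c b) : IsPath E (a :: p) a b :=
  (singleton a).append h e

theorem append_tail (h₁ : IsPath E p a m) (h₂ : IsPath E q m b) : IsPath E (p ++ q.tail) a b := by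
  obtain ⟨t, rfl⟩ := h₂.exists_eq_cons
  cases t with
  | nil => simpa [show m = b by simpa using h₂.2.2.1] using h₁
  | cons c t =>
    have hc := h₂.isChain
    rw [isChain_cons_cons] at hc
    exact h₁.append ⟨cons_ne_nil _ _, rfl, by simpa using h₂.2.2.1, hc.2⟩ hc.1

theorem exists_prefix (h : IsPath E p a b) (hx : x ∈ p) : ∃ p', IsPath E p' a x ∧ p' ⊆ p := by
  obtain ⟨s, t, rfl⟩ := append_of_mem hx
  have hpre : s ++ [x] <+: s ++ x :: t := ⟨t, by simp⟩
  exact ⟨s ++ [x], ⟨by simp, by simpa using h.2.1, by simp, h.isChain.prefix hpre⟩, hpre.subset⟩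

theorem exists_suffix (h : IsPath E p a b) (hx : x ∈ p) : ∃ p', IsPath E p' x b ∧ p' ⊆ p := by
  obtain ⟨s, t, rfl⟩ := append_of_mem hx
  refine ⟨x :: t, ⟨cons_ne_nil _ _, rfl, ?_, h.isChain.suffix (suffix_append s _)⟩,
    fun y hy => mem_append_right s hy⟩
  simpa using h.2.2.1

theorem exists_first_entry {T : List V} (h : IsPath E p a b) (ha : a ∉ T) (hx : x ∈ p)
    (hxT : x ∈ T) : ∃ q u w, IsPath E q a u ∧ (∀ y ∈ q, y ∉ T) ∧ E u w ∧ w ∈ T ∧ w ∈ p := by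
  obtain ⟨t, rfl⟩ := h.exists_eq_cons
  have hc := h.isChain
  clear h
  induction t generalizing a with
  | nil => exact absurd (mem_singleton.mp hx ▸ hxT) ha
  | cons c t ih =>
    rw [isChain_cons_cons] at hc
    by_cases hcT : c ∈ T
    · exact ⟨[a], a, c, singleton a, by simpa using ha, hc.1, hcT, by simp⟩
    have hx' : x ∈ c :: t := (mem_cons.mp hx).resolve_left (by rintro rfl; exact ha hxT)
    obtain ⟨q, u, w, hq, hqT, e, hwT, hw⟩ := ih hcT hx' hc.2
    exact ⟨a :: q, u, w, hq.cons hc.1, by simpa [ha] using hqT, e, hwT, mem_cons_of_mem a hw⟩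

variable [DecidableEq V] {layer : V → ℕ}

theorem layer_eq_add_idxOf (hE : ∀ u w, E u w → layer w = layer u + 1) (h : IsPath E p a b)
    (hx : x ∈ p) : layer x = layer a + p.idxOf x := by
  obtain ⟨t, rfl⟩ := h.exists_eq_cons
  have hc := h.isChain
  clear h
  induction t generalizing a with
  | nil => simp [mem_singleton.mp hx]
  | cons c t ih =>
    rw [isChain_cons_cons] at hc
    by_cases hxa : x = a
    · simp [hxa]
    rw [idxOf_cons_ne _ (Ne.symm hxa), ih ((mem_cons.mp hx).resolve_left hxa) hc.2, hE _ _ hc.1]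
    omega

theorem layer_lt_of_mem (hE : ∀ u w, E u w → layer w = layer u + 1) (h : IsPath E p a b)
    (hx : x ∈ p) (hxa : x ≠ a) : layer a < layer x := by
  obtain ⟨t, rfl⟩ := h.exists_eq_cons
  rw [h.layer_eq_add_idxOf hE hx, idxOf_cons_ne _ (Ne.symm hxa)]
  omega

end IsPath

namespace TwoUnicastNetwork

variable {V : Type*} [Fintype V] (N : TwoUnicastNetwork V)

theorem s1_not_mem_of_isPath_s2 [DecidableEq V] {p : List V} {b : V} (hp : IsPath N.E p N.s2 b) :
    N.s1 ∉ p := fun h => by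
  have := hp.layer_lt_of_mem N.edge_layer h N.s_ne
  rw [(N.first_layer _).mpr (.inl rfl), (N.first_layer _).mpr (.inr rfl)] at this
  exact this.false

variable {N} {S : Set V} {R P p : List V} {s b x w v0 v2 : V}

theorem interferesOn_of_mem_isPath (hp : IsPath N.E p s b) (hx : x ∈ p) (hpS : ∀ y ∈ p, y ∈ S)
    (hpR : ∀ y ∈ p, y ∉ R) (hw : w ∈ R) (hwS : w ∈ S) (e : N.E x w) : InterferesOn N S R s x := by
  obtain ⟨q, hq, hqp⟩ := hp.exists_prefix hx
  exact ⟨hpS x hx, hpR x hx, ⟨w, hw, hwS, e⟩, q, hq, fun y hy => hpS y (hqp hy),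
    fun y hy => hpR y (hqp hy)⟩

theorem nInterf_ne_one {y : V} (hx : InterferesOn N S R s x) (hy : InterferesOn N S R s y)
    (hxy : x ≠ y) : nInterf N S R s ≠ 1 := by
  intro h1
  obtain ⟨z, hz⟩ := Set.ncard_eq_one.mp h1
  have hxz : x ∈ ({z} : Set V) := hz ▸ hx
  have hyz : y ∈ ({z} : Set V) := hz ▸ hy
  exact hxy (hxz.trans hyz.symm)

theorem nInterf_eq_zero (h : ∀ x, ¬ InterferesOn N S R s x) : nInterf N S R s = 0 := by
  simp [nInterf, h]

theorem mem_of_isPath_of_interferesOn_eq (hv2 : {v | InterferesOn N Set.univ P s v} = {v2})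
    (hv0 : ∀ w ∈ P, N.E v2 w → w = v0) (hs : s ∉ P) (hp : IsPath N.E p s b) (hx : x ∈ p)
    (hxP : x ∈ P) : v0 ∈ p := by
  obtain ⟨q, u, w, hq, hqP, e, hwP, hwp⟩ := hp.exists_first_entry hs hx hxP
  have hu : u ∈ ({v2} : Set V) :=
    hv2 ▸ interferesOn_of_mem_isPath hq hq.getLast_mem (fun _ _ => trivial) hqP hwP trivial e
  rw [Set.mem_singleton_iff] at hu
  exact hv0 w hwP (hu ▸ e) ▸ hwp

theorem cutVert_of_mem (hmeet : ∀ p b, IsPath N.E p s b → (∃ x ∈ p, x ∈ P) → v0 ∈ p)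
    {Q : List V} {a d : V} (hQ : IsPath N.E Q a d) (hd : d ∈ P) (hv0 : v0 ∉ Q) (hx : x ∈ Q) :
    CutVert N v0 s x := by
  intro p hp
  obtain ⟨q, hq, hqQ⟩ := hQ.exists_suffix hx
  have hpq := hp.append_tail hq
  rcases mem_append.mp (hmeet _ _ hpq ⟨d, hpq.getLast_mem, hd⟩) with h | h
  · exact h
  · exact absurd (hqQ (mem_of_mem_tail h)) hv0

end TwoUnicastNetwork

namespace TwoUnicastNetwork

variable {V : Type*} [Fintype V] {N : TwoUnicastNetwork V} {S : Set V} {R : List V} {s v0 : V}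

theorem nInterf_eq_zero_of_cutVert (hcut : ∀ x ∈ R, CutVert N v0 s x) (hv0R : v0 ∉ R)
    (hv0S : v0 ∉ S) : nInterf N S R s = 0 :=
  nInterf_eq_zero fun _ ⟨_, _, ⟨w, hwR, _, e⟩, _, hq, hqS, _⟩ => by
    rcases mem_append.mp (hcut w hwR _ (hq.concat e)) with h | h
    · exact hv0S (hqS _ h)
    · exact hv0R (mem_singleton.mp h ▸ hwR)

theorem manageable_of_cutVert {R1 R2 W : List V} {v1 b : V} (hR2 : IsPath N.E R2 N.s2 b)
    (hdisj : R1.Disjoint R2) (hcut : ∀ x ∈ R2, CutVert N v0 N.s1 x) (hv0R1 : v0 ∉ R1)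
    (hv0R2 : v0 ∉ R2) (hW : IsPath N.E W N.s2 v1) (hWR1 : W.Disjoint R1) (hv0W : v0 ∉ W)
    (hv1 : ∃ w ∈ R1, N.E v1 w) (hv1R2 : v1 ∉ R2) : Manageable N R1 R2 := by
  by_cases hR2R1 : ∃ u ∈ R2, ∃ w ∈ R1, N.E u w
  · obtain ⟨u, hu, w, hw, e⟩ := hR2R1
    obtain ⟨w1, hw1, e1⟩ := hv1
    let S : Set V := {x | x ∈ R1 ∨ x ∈ R2 ∨ x ∈ W}
    refine ⟨S, fun x hx => .inl hx, fun x hx => .inr (.inl hx), nInterf_ne_one (x := v1) (y := u)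
      (interferesOn_of_mem_isPath hW hW.getLast_mem (fun y hy => .inr (.inr hy))
        (fun y hy hy1 => hWR1 hy hy1) hw1 (.inl hw1) e1)
      (interferesOn_of_mem_isPath hR2 hu (fun y hy => .inr (.inl hy))
        (fun y hy hy1 => hdisj hy1 hy) hw (.inl hw) e)
      (fun h => hv1R2 (h ▸ hu)), ?_⟩
    rw [nInterf_eq_zero_of_cutVert hcut hv0R2 (by rintro (h | h | h) <;> contradiction)]
    decide
  · refine ⟨{x | x ∈ R1 ∨ x ∈ R2}, fun x hx => .inl hx, fun x hx => .inr hx, ?_, ?_⟩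
    · rw [nInterf_eq_zero fun x ⟨hxS, hxR1, ⟨w, hw, _, e⟩, _⟩ =>
        hR2R1 ⟨x, hxS.resolve_left hxR1, w, hw, e⟩]
      decide
    · rw [nInterf_eq_zero_of_cutVert hcut hv0R2 (by rintro (h | h) <;> contradiction)]
      decide

end TwoUnicastNetwork

theorem statement5_general {V : Type*} [Fintype V] [DecidableEq V]
    (N : TwoUnicastNetwork V)
    (P11 P22 Ps2v1 Pvmv1 : List V)
    (v0 v1 v2 vm : V)
    (hP11 : IsPath N.E P11 N.s1 N.d1)
    (hP22 : IsPath N.E P22 N.s2 N.d2)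
    (hdisj : P11.Disjoint P22)
    (hNoMan : ∀ R1 R2 : List V, IsPath N.E R1 N.s1 N.d1 → IsPath N.E R2 N.s2 N.d2 →
      R1.Disjoint R2 → ¬ Manageable N R1 R2)
    (hv1int : InterferesOn N Set.univ P11 N.s2 v1)
    (hPs2v1 : IsPath N.E Ps2v1 N.s2 v1)
    (hPs2v1disj : Ps2v1.Disjoint P11)
    (hvmPs2v1 : vm ∈ Ps2v1)
    (hvmlast : ∀ x ∈ Ps2v1, x ∈ P22 → Ps2v1.idxOf x ≤ Ps2v1.idxOf vm)
    (hPvmv1 : IsPath N.E Pvmv1 vm v1)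
    (hPvmv1suffix : Pvmv1 <:+ Ps2v1)
    (hv2Pvmv1 : v2 ∈ Pvmv1)
    (hv2ne : v2 ≠ vm)
    (hv2unique : {v | InterferesOn N Set.univ P22 N.s1 v} = {v2})
    (hv0P22 : v0 ∈ P22)
    (hv2v0 : N.E v2 v0)
    (hv2v0unique : ∀ w ∈ P22, N.E v2 w → w = v0) :
    (∀ p : List V, IsPath N.E p N.s1 N.d2 → v0 ∈ p) ∧
    (∀ p : List V, IsPath N.E p N.s2 N.d2 → v0 ∈ p) := by
  have hmeet : ∀ p b, IsPath N.E p N.s1 b → (∃ x ∈ p, x ∈ P22) → v0 ∈ p :=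
    fun _ _ hp ⟨_, hx, hxP⟩ => TwoUnicastNetwork.mem_of_isPath_of_interferesOn_eq hv2unique
      hv2v0unique (N.s1_not_mem_of_isPath_s2 hP22) hp hx hxP
  refine ⟨fun p hp => hmeet p _ hp ⟨_, hp.getLast_mem, hP22.getLast_mem⟩, fun Q hQ => ?_⟩
  by_contra hv0Q
  have hcut : ∀ x ∈ Q, CutVert N v0 N.s1 x := fun _ =>
    TwoUnicastNetwork.cutVert_of_mem hmeet hQ hP22.getLast_mem hv0Q
  have hv0P11 : v0 ∉ P11 := fun h => hdisj h hv0P22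
  -- `Ps2v1` meets `P22` only up to the layer of `vm`, which lies below `v2` and hence below `v0`.
  have hv0Ps2v1 : v0 ∉ Ps2v1 := fun h => by
    have := hPvmv1.layer_lt_of_mem N.edge_layer hv2Pvmv1 hv2ne
    have := N.edge_layer _ _ hv2v0
    have := hPs2v1.layer_eq_add_idxOf N.edge_layer h
    have := hPs2v1.layer_eq_add_idxOf N.edge_layer hvmPs2v1
    have := hvmlast v0 h hv0P22
    omega
  have hv1Q : v1 ∉ Q := fun h => by
    obtain ⟨-, -, -, q, hq, -, hqP22⟩ : InterferesOn N Set.univ P22 N.s1 v2 :=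
      (Set.ext_iff.mp hv2unique v2).mpr rfl
    obtain ⟨r, hr, hrPs2v1⟩ := hPs2v1.exists_suffix (hPvmv1suffix.subset hv2Pvmv1)
    rcases mem_append.mp (hcut v1 h _ (hq.append_tail hr)) with h | h
    · exact hqP22 _ h hv0P22
    · exact hv0Ps2v1 (hrPs2v1 (mem_of_mem_tail h))
  have hP11Q : P11.Disjoint Q := fun x hx hxQ => by
    obtain ⟨q, hq, hqP11⟩ := hP11.exists_prefix hx
    exact hv0P11 (hqP11 (hcut x hxQ q hq))
  obtain ⟨-, -, hv1edge, -⟩ := hv1int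
  exact hNoMan P11 Q hP11 hQ hP11Q <|
    TwoUnicastNetwork.manageable_of_cutVert hQ hP11Q hcut hv0P11 hv0Q hPs2v1 hPs2v1disj
      hv0Ps2v1 (by simpa using hv1edge) hv1Q

theorem statement5 {V : Type*} [Fintype V] [DecidableEq V]
    (N : TwoUnicastNetwork V)
    (P11 P22 Ps2v1 Pvmv1 Ps1v2 : List V)
    (v0 v1 v2 v3 v4 v5 v6 vm : V)
    (hP11 : IsPath N.E P11 N.s1 N.d1)
    (hP22 : IsPath N.E P22 N.s2 N.d2)
    (hdisj : P11.Disjoint P22)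
    (hNoMan : ∀ R1 R2 : List V, IsPath N.E R1 N.s1 N.d1 → IsPath N.E R2 N.s2 N.d2 →
      R1.Disjoint R2 → ¬ Manageable N R1 R2)
    (hn1 : 2 ≤ nInterf N Set.univ P11 N.s2)
    (hn1D : nDirect N P11 P22 N.s2 = 1)
    (hn2 : nInterf N Set.univ P22 N.s1 = 1)
    (hn2D : nDirect N P22 P11 N.s1 = 0)
    (hv3P22 : v3 ∈ P22)
    (hv3unique : {v | InterferesOn N Set.univ P11 N.s2 v ∧ v ∈ P22} = {v3})
    (hv4P11 : v4 ∈ P11)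
    (hv3v4 : N.E v3 v4)
    (hv3v4unique : ∀ w ∈ P11, N.E v3 w → w = v4)
    (hv1P11 : v1 ∉ P11)
    (hv1P22 : v1 ∉ P22)
    (hv1int : InterferesOn N Set.univ P11 N.s2 v1)
    (hPs2v1 : IsPath N.E Ps2v1 N.s2 v1)
    (hPs2v1disj : Ps2v1.Disjoint P11)
    (hvmP22 : vm ∈ P22)
    (hvmPs2v1 : vm ∈ Ps2v1)
    (hvmlast : ∀ x ∈ Ps2v1, x ∈ P22 → Ps2v1.idxOf x ≤ Ps2v1.idxOf vm)
    (hPvmv1 : IsPath N.E Pvmv1 vm v1)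
    (hPvmv1suffix : Pvmv1 <:+ Ps2v1)
    (hv2Pvmv1 : v2 ∈ Pvmv1)
    (hv2ne : v2 ≠ vm)
    (hv2unique : {v | InterferesOn N Set.univ P22 N.s1 v} = {v2})
    (hv0P22 : v0 ∈ P22)
    (hv2v0 : N.E v2 v0)
    (hv2v0unique : ∀ w ∈ P22, N.E v2 w → w = v0)
    (hPs1v2 : IsPath N.E Ps1v2 N.s1 v2)
    (hPs1v2sub : ∀ x ∈ Ps1v2, x ∈ P11 ∨ x ∈ P22 ∨ x ∈ Pvmv1)
    (hv5P11 : v5 ∈ P11)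
    (hv5mem : v5 ∈ Ps1v2)
    (hv5last : ∀ x ∈ Ps1v2, x ∈ P11 → Ps1v2.idxOf x ≤ Ps1v2.idxOf v5)
    (hv6succ : ∃ k : ℕ, Ps1v2[k]? = some v5 ∧ Ps1v2[k+1]? = some v6) :
    (∀ p : List V, IsPath N.E p N.s1 N.d2 → v0 ∈ p) ∧
    (∀ p : List V, IsPath N.E p N.s2 N.d2 → v0 ∈ p) :=
  statement5_general N P11 P22 Ps2v1 Pvmv1 v0 v1 v2 vm hP11 hP22 hdisj hNoMan hv1int hPs2v1
    hPs2v1disj hvmPs2v1 hvmlast hPvmv1 hPvmv1suffix hv2Pvmv1 hv2ne hv2unique hv0P22 hv2v0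
    hv2v0unique
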